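/- Let m ≥ 1, let M, N ⊆ [m] with ∅ ≠ M ⊊ [m], and let D = aΔ_M^c + cΔ_N ⊆ E^m. Then the binary Gray image Φ(C^L_D) is an F₂-linear code of length (2^m−2^{|M|})·2^{|N|+1}, with 2^{2m} codewords (F₂-dimension 2m), and minimum nonzero Hamming weight (2^m−2^{|M|})·2^{|N|−1} (i.e. 2^{m+|N|−1}−2^{|M|+|N|−1}). Moreover, if |M|+|N| ≥ 3, then Φ(C^L_D) is self-orthogonal. -/

import Mathlib

open Finset

/-- The simplicial complex `Δ_M ⊆ 𝔽₂^m` generated by `M ⊆ [m]`: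
all vectors whose support is contained in `M`. -/
def deltaC {m : ℕ} (M : Finset (Fin m)) : Finset (Fin m → ZMod 2) :=
  Finset.univ.filter (fun w => ∀ i, w i ≠ 0 → i ∈ M)

/-- Dot product over `𝔽₂`. -/
def dotp {m : ℕ} (x y : Fin m → ZMod 2) : ZMod 2 := ∑ i, x i * y i

/-- The Gray map on a single element `a·s + c·t ↔ (s, t)` of `E = 𝔽₂ × 𝔽₂`:
`Φ(as + ct) = (t, s + t)`. -/
def grayPair (e : ZMod 2 × ZMod 2) : Fin 2 → ZMod 2 := ![e.2, e.1 + e.2]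

/-- The left codeword `c^L_D(v)` for `v = aα + cβ ↔ (α, β)`:
its coordinate at `d = (t₁, t₂) ∈ D` is `a(α·t₁) + c(β·t₁) ↔ (α·t₁, β·t₁)`. -/
def cwL {m : ℕ} (Ds : Finset ((Fin m → ZMod 2) × (Fin m → ZMod 2)))
    (v : (Fin m → ZMod 2) × (Fin m → ZMod 2)) :
    {d // d ∈ Ds} → ZMod 2 × ZMod 2 :=
  fun d => (dotp v.1 d.1.1, dotp v.2 d.1.1)

/-- The Gray image `Φ(c^L_D(v)) ∈ 𝔽₂^{2|D|}` of the left codeword `c^L_D(v)`;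
its Hamming weight (`hammingNorm`) is the Lee weight of `c^L_D(v)`. -/
def gcwL {m : ℕ} (Ds : Finset ((Fin m → ZMod 2) × (Fin m → ZMod 2)))
    (v : (Fin m → ZMod 2) × (Fin m → ZMod 2)) :
    {d // d ∈ Ds} × Fin 2 → ZMod 2 :=
  fun x => grayPair (cwL Ds v x.1) x.2

/-- The right codeword `c^R_D(v)` for `v = aα + cβ ↔ (α, β)`:
its coordinate at `d = (t₁, t₂) ∈ D` is `a(t₁·α) + c(t₂·α) ↔ (t₁·α, t₂·α)`. -/
def cwR {m : ℕ} (Ds : Finset ((Fin m → ZMod 2) × (Fin m → ZMod 2)))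
    (v : (Fin m → ZMod 2) × (Fin m → ZMod 2)) :
    {d // d ∈ Ds} → ZMod 2 × ZMod 2 :=
  fun d => (dotp d.1.1 v.1, dotp d.1.2 v.1)

/-- The Gray image `Φ(c^R_D(v)) ∈ 𝔽₂^{2|D|}` of the right codeword `c^R_D(v)`;
its Hamming weight (`hammingNorm`) is the Lee weight of `c^R_D(v)`. -/
def gcwR {m : ℕ} (Ds : Finset ((Fin m → ZMod 2) × (Fin m → ZMod 2)))
    (v : (Fin m → ZMod 2) × (Fin m → ZMod 2)) :
    {d // d ∈ Ds} × Fin 2 → ZMod 2 :=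
  fun x => grayPair (cwR Ds v x.1) x.2

/-!
Write `v = (α, β)`. At `(t₁, t₂) ∈ D` the Gray image of `c^L_D(v)` is `(β·t₁, (α+β)·t₁)`, so the
code is `𝔽₂`-linear and its weight is `2^|N| (w β + w (α+β))`, where `w γ` counts the
`t ∈ Δ_M^c` with `γ·t ≠ 0`. A linear form that takes the value `1` at `t₀` is nonzero on exactly
half of any set closed under translation by `t₀`; applied to `𝔽₂^m` and to `Δ_M` this gives
`2 w γ ≥ 2^m - 2^|M|` for `γ ≠ 0`, with equality for `γ = e_i`, `i ∈ M`. Since `M ≠ [m]`, adding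
`e_j` (`j ∉ M`) moves `Δ_M` into `Δ_M^c`, so a form vanishing on `Δ_M^c` is zero: the code has
`2^{2m}` words. The inner product of two codewords is `2^|N|` times a sum over `Δ_M^c` of
products `(γ·t)(δ·t) = Σ γᵢ δⱼ tᵢ tⱼ`; if `N = ∅` then `|M| ≥ 3`, and translating by `e_k` with
`k ∈ M ∖ {i, j}` pairs off the terms of each `Σ_t tᵢ tⱼ`.
-/
open Matrix

lemma Pi.add_self_zmod_two {ι : Type*} (x : ι → ZMod 2) : x + x = 0 :=
  funext fun _ => CharTwo.add_self_eq_zero _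

lemma Pi.add_add_cancel_zmod_two {ι : Type*} (x y : ι → ZMod 2) : x + y + y = x := by
  rw [add_assoc, Pi.add_self_zmod_two, add_zero]

section Halving

variable {ι : Type*}

lemma two_mul_card_filter_dotProduct_ne_zero [Fintype ι] {S : Finset (ι → ZMod 2)}
    {γ t₀ : ι → ZMod 2} (h₀ : γ ⬝ᵥ t₀ = 1) (hS : ∀ t ∈ S, t + t₀ ∈ S) :
    2 * #{t ∈ S | γ ⬝ᵥ t ≠ 0} = #S := by
  have hflip (x : ZMod 2) : x + 1 ≠ 0 ↔ x = 0 := by revert x; decide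
  have hswap : #{t ∈ S | ¬γ ⬝ᵥ t ≠ 0} = #{t ∈ S | γ ⬝ᵥ t ≠ 0} := by
    refine card_nbij' (· + t₀) (· + t₀) ?_ ?_ ?_ ?_
    · intro t ht
      simp only [coe_filter, Set.mem_ofPred_eq, not_not] at ht ⊢
      exact ⟨hS t ht.1, by rw [dotProduct_add, h₀, hflip]; exact ht.2⟩
    · intro t ht
      simp only [coe_filter, Set.mem_ofPred_eq, not_not] at ht ⊢
      exact ⟨hS t ht.1, by rw [dotProduct_add, h₀, ← hflip, CharTwo.add_cancel_right]; exact ht.2⟩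
    · exact fun t _ => Pi.add_add_cancel_zmod_two t t₀
    · exact fun t _ => Pi.add_add_cancel_zmod_two t t₀
  have := card_filter_add_card_filter_not (s := S) (fun t => γ ⬝ᵥ t ≠ 0)
  omega

lemma two_mul_card_filter_univ_dotProduct_ne_zero [Fintype ι] [DecidableEq ι] {γ : ι → ZMod 2}
    (hγ : γ ≠ 0) : 2 * #{t | γ ⬝ᵥ t ≠ 0} = 2 ^ Fintype.card ι := by
  obtain ⟨i, hi⟩ := Function.ne_iff.mp hγ
  have h₀ : γ ⬝ᵥ Pi.single i 1 = 1 := by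
    rw [dotProduct_single, mul_one]; exact Fin.eq_one_of_ne_zero _ hi
  rw [two_mul_card_filter_dotProduct_ne_zero h₀ fun t _ => mem_univ _, card_univ,
    Fintype.card_fun, ZMod.card]

lemma sum_eq_zero_of_add_mem {S : Finset (ι → ZMod 2)} {t₀ : ι → ZMod 2} (ht₀ : t₀ ≠ 0)
    (hS : ∀ t ∈ S, t + t₀ ∈ S) {f : (ι → ZMod 2) → ZMod 2} (hf : ∀ t, f (t + t₀) = f t) :
    ∑ t ∈ S, f t = 0 :=
  sum_involution (fun t _ => t + t₀) (fun t _ => by rw [hf, CharTwo.add_self_eq_zero])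
    (fun t _ _ => by simpa using ht₀) hS (fun t _ => Pi.add_add_cancel_zmod_two t t₀)

end Halving

section DeltaC

variable {m : ℕ} {M : Finset (Fin m)}

lemma mem_deltaC {w : Fin m → ZMod 2} : w ∈ deltaC M ↔ ∀ i, w i ≠ 0 → i ∈ M := by
  simp [deltaC]

lemma deltaC_eq_piFinset :
    deltaC M = Fintype.piFinset fun i => if i ∈ M then univ else {0} := by
  ext w
  simp only [mem_deltaC, Fintype.mem_piFinset]
  refine forall_congr' fun i => ?_
  split_ifs with hi <;> simp [hi]

lemma card_deltaC (M : Finset (Fin m)) : #(deltaC M) = 2 ^ #M := by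
  rw [deltaC_eq_piFinset, Fintype.card_piFinset]
  simp [apply_ite, prod_ite_mem]

lemma add_single_mem_deltaC_iff {i : Fin m} (hi : i ∈ M) {t : Fin m → ZMod 2} :
    t + Pi.single i 1 ∈ deltaC M ↔ t ∈ deltaC M := by
  suffices h : ∀ t, t ∈ deltaC M → t + Pi.single i 1 ∈ deltaC M from
    ⟨fun ht => Pi.add_add_cancel_zmod_two t (Pi.single i 1) ▸ h _ ht, h t⟩
  intro t ht
  rw [mem_deltaC] at ht ⊢
  intro k hk
  by_cases hki : k = i
  · exact hki ▸ hi
  · exact ht k (by simpa [Pi.single_apply, hki] using hk)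


lemma two_mul_card_filter_deltaC_dotProduct_ne_zero {γ : Fin m → ZMod 2} {i : Fin m}
    (hi : i ∈ M) (hγi : γ i ≠ 0) : 2 * #{t ∈ deltaC M | γ ⬝ᵥ t ≠ 0} = 2 ^ #M := by
  have h₀ : γ ⬝ᵥ Pi.single i 1 = 1 := by
    rw [dotProduct_single, mul_one]; exact Fin.eq_one_of_ne_zero _ hγi
  rw [two_mul_card_filter_dotProduct_ne_zero h₀ fun t => (add_single_mem_deltaC_iff hi).2,
    card_deltaC]

lemma filter_deltaC_dotProduct_ne_zero_eq_empty {γ : Fin m → ZMod 2} (hγ : ∀ i ∈ M, γ i = 0) :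
    {t ∈ deltaC M | γ ⬝ᵥ t ≠ 0} = ∅ := by
  refine filter_false_of_mem fun t ht => not_not.2 (sum_eq_zero fun k _ => ?_)
  by_cases htk : t k = 0
  · rw [htk, mul_zero]
  · rw [hγ k (mem_deltaC.1 ht k htk), zero_mul]

lemma card_filter_compl_add_card_filter {α : Type*} [Fintype α] [DecidableEq α] (s : Finset α)
    (p : α → Prop) [DecidablePred p] : #{x ∈ sᶜ | p x} + #{x ∈ s | p x} = #{x | p x} := by
  rw [add_comm, ← card_union_of_disjoint (disjoint_filter_filter disjoint_compl_right),
    ← filter_union, union_compl]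

lemma sub_le_two_mul_card_filter_compl_deltaC {γ : Fin m → ZMod 2} (hγ : γ ≠ 0) :
    2 ^ m - 2 ^ #M ≤ 2 * #{t ∈ (deltaC M)ᶜ | γ ⬝ᵥ t ≠ 0} := by
  have hsplit := card_filter_compl_add_card_filter (deltaC M) (fun t => γ ⬝ᵥ t ≠ 0)
  have huniv := two_mul_card_filter_univ_dotProduct_ne_zero hγ
  rw [Fintype.card_fin] at huniv
  have hΔ : 2 * #{t ∈ deltaC M | γ ⬝ᵥ t ≠ 0} ≤ 2 ^ #M := by
    by_cases h : ∃ i ∈ M, γ i ≠ 0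
    · obtain ⟨i, hi, hγi⟩ := h
      exact (two_mul_card_filter_deltaC_dotProduct_ne_zero hi hγi).le
    · push Not at h
      simp [filter_deltaC_dotProduct_ne_zero_eq_empty h]
  omega

lemma two_mul_card_filter_compl_deltaC_single {i : Fin m} (hi : i ∈ M) :
    2 * #{t ∈ (deltaC M)ᶜ | Pi.single i 1 ⬝ᵥ t ≠ 0} = 2 ^ m - 2 ^ #M := by
  have hsplit :=
    card_filter_compl_add_card_filter (deltaC M) (fun t => Pi.single i (1 : ZMod 2) ⬝ᵥ t ≠ 0)
  have huniv := two_mul_card_filter_univ_dotProduct_ne_zero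
    (Pi.single_ne_zero_iff.2 (one_ne_zero (α := ZMod 2)) : Pi.single i 1 ≠ 0)
  rw [Fintype.card_fin] at huniv
  have hΔ := two_mul_card_filter_deltaC_dotProduct_ne_zero (γ := Pi.single i (1 : ZMod 2)) hi
    (by simp)
  omega

lemma eq_zero_of_dotProduct_compl_deltaC_eq_zero (hM : M ≠ univ) {γ : Fin m → ZMod 2}
    (hγ : ∀ t ∈ (deltaC M)ᶜ, γ ⬝ᵥ t = 0) : γ = 0 := by
  obtain ⟨j, hj⟩ : ∃ j, j ∉ M := by simpa [eq_univ_iff_forall] using hM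
  have hleave : ∀ t ∈ deltaC M, t + Pi.single j 1 ∉ deltaC M := fun t ht hjt =>
    hj (mem_deltaC.1 hjt j (by simp [not_not.1 ((mem_deltaC.1 ht j).mt hj)]))
  have hsingle : γ ⬝ᵥ Pi.single j 1 = 0 :=
    hγ _ (mem_compl.2 (by simpa using hleave 0 (by simp [mem_deltaC])))
  refine dotProduct_eq_zero γ fun t => ?_
  by_cases ht : t ∈ deltaC M
  · have := hγ _ (mem_compl.2 (hleave t ht))
    rwa [dotProduct_add, hsingle, add_zero] at this
  · exact hγ t (mem_compl.2 ht)

lemma sum_apply_mul_apply_compl_deltaC (hM : 3 ≤ #M) (i j : Fin m) :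
    ∑ t ∈ (deltaC M)ᶜ, t i * t j = 0 := by
  obtain ⟨k, hk⟩ : ((M.erase i).erase j).Nonempty := by
    rw [← card_pos]
    have := (M.erase i).pred_card_le_card_erase (a := j)
    have := M.pred_card_le_card_erase (a := i)
    omega
  obtain ⟨hkj, hki, hkM⟩ : k ≠ j ∧ k ≠ i ∧ k ∈ M := by simpa using hk
  refine sum_eq_zero_of_add_mem (Pi.single_ne_zero_iff.2 one_ne_zero)
    (fun t ht => mem_compl.2 ((add_single_mem_deltaC_iff hkM).not.2 (mem_compl.1 ht))) fun t => ?_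
  simp [hki.symm, hkj.symm]

lemma sum_dotProduct_mul_dotProduct_compl_deltaC (hM : 3 ≤ #M) (γ δ : Fin m → ZMod 2) :
    ∑ t ∈ (deltaC M)ᶜ, γ ⬝ᵥ t * δ ⬝ᵥ t = 0 := by
  have hexpand (t : Fin m → ZMod 2) :
      γ ⬝ᵥ t * δ ⬝ᵥ t = ∑ i, ∑ j, γ i * δ j * (t i * t j) := by
    simp only [dotProduct, sum_mul_sum]
    exact sum_congr rfl fun i _ => sum_congr rfl fun j _ => by ring
  simp only [hexpand]
  rw [sum_comm]
  refine sum_eq_zero fun i _ => ?_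
  rw [sum_comm]
  exact sum_eq_zero fun j _ => by rw [← mul_sum, sum_apply_mul_apply_compl_deltaC hM, mul_zero]

end DeltaC

lemma sum_coe_product_fst {α β R : Type*} [AddCommMonoid R] (A : Finset α) (B : Finset β)
    (g : α → R) : ∑ d : A ×ˢ B, g d.1.1 = #B • ∑ a ∈ A, g a := by
  rw [sum_coe_sort (A ×ˢ B) (fun d => g d.1), sum_product, smul_sum]
  exact sum_congr rfl fun a _ => sum_const (g a)

section GrayImage

variable {m : ℕ}

lemma gcwL_apply_zero (Ds : Finset ((Fin m → ZMod 2) × (Fin m → ZMod 2)))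
    (v : (Fin m → ZMod 2) × (Fin m → ZMod 2)) (d : {d // d ∈ Ds}) :
    gcwL Ds v (d, 0) = v.2 ⬝ᵥ d.1.1 := by
  rw [gcwL]; rfl

lemma gcwL_apply_one (Ds : Finset ((Fin m → ZMod 2) × (Fin m → ZMod 2)))
    (v : (Fin m → ZMod 2) × (Fin m → ZMod 2)) (d : {d // d ∈ Ds}) :
    gcwL Ds v (d, 1) = (v.1 + v.2) ⬝ᵥ d.1.1 := by
  rw [add_dotProduct]; rfl

lemma gcwL_add (Ds : Finset ((Fin m → ZMod 2) × (Fin m → ZMod 2)))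
    (v w : (Fin m → ZMod 2) × (Fin m → ZMod 2)) : gcwL Ds (v + w) = gcwL Ds v + gcwL Ds w := by
  ext ⟨d, j⟩
  fin_cases j
  · simp [gcwL_apply_zero, add_dotProduct]
  · simp [gcwL_apply_one, add_dotProduct]
    ring

def gcwLAddHom (Ds : Finset ((Fin m → ZMod 2) × (Fin m → ZMod 2))) :
    (Fin m → ZMod 2) × (Fin m → ZMod 2) →+ ({d // d ∈ Ds} × Fin 2 → ZMod 2) :=
  AddMonoidHom.mk' (gcwL Ds) (gcwL_add Ds)

lemma hammingNorm_gcwL_product (A B : Finset (Fin m → ZMod 2))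
    (v : (Fin m → ZMod 2) × (Fin m → ZMod 2)) :
    hammingNorm (gcwL (A ×ˢ B) v) =
      #B * (#{t ∈ A | v.2 ⬝ᵥ t ≠ 0} + #{t ∈ A | (v.1 + v.2) ⬝ᵥ t ≠ 0}) := by
  rw [hammingNorm, card_filter, Fintype.sum_prod_type]
  simp only [Fin.sum_univ_two, gcwL_apply_zero, gcwL_apply_one, sum_add_distrib]
  rw [sum_coe_product_fst A B (fun t => if v.2 ⬝ᵥ t ≠ 0 then 1 else 0),
    sum_coe_product_fst A B (fun t => if (v.1 + v.2) ⬝ᵥ t ≠ 0 then 1 else 0),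
    ← card_filter, ← card_filter, smul_eq_mul, smul_eq_mul, mul_add]

lemma sum_gcwL_mul_gcwL_product (A B : Finset (Fin m → ZMod 2))
    (v w : (Fin m → ZMod 2) × (Fin m → ZMod 2)) :
    ∑ x, gcwL (A ×ˢ B) v x * gcwL (A ×ˢ B) w x =
      #B • ∑ t ∈ A, (v.2 ⬝ᵥ t * w.2 ⬝ᵥ t + (v.1 + v.2) ⬝ᵥ t * (w.1 + w.2) ⬝ᵥ t) := by
  rw [Fintype.sum_prod_type]
  simp only [Fin.sum_univ_two, gcwL_apply_zero, gcwL_apply_one]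
  exact sum_coe_product_fst A B fun t =>
    v.2 ⬝ᵥ t * w.2 ⬝ᵥ t + (v.1 + v.2) ⬝ᵥ t * (w.1 + w.2) ⬝ᵥ t

end GrayImage

lemma two_mul_two_pow_sub_two_pow {k m : ℕ} (n : ℕ) (hk : 1 ≤ k) (hkm : k ≤ m) :
    2 * (2 ^ (m + n - 1) - 2 ^ (k + n - 1)) = 2 ^ n * (2 ^ m - 2 ^ k) := by
  rw [Nat.mul_sub, Nat.mul_sub, ← pow_succ', ← pow_succ', ← pow_add, ← pow_add]
  congr 2 <;> omega

section LeftGrayCode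

variable {m : ℕ} {M N : Finset (Fin m)}

lemma gcwL_deltaC_injective (hM : M ≠ univ) :
    Function.Injective (gcwL ((deltaC M)ᶜ ×ˢ deltaC N)) := by
  refine (injective_iff_map_eq_zero (gcwLAddHom _)).2 fun v hv => ?_
  have hvanish (t) (ht : t ∈ (deltaC M)ᶜ) : v.2 ⬝ᵥ t = 0 ∧ (v.1 + v.2) ⬝ᵥ t = 0 := by
    let d : {d // d ∈ (deltaC M)ᶜ ×ˢ deltaC N} :=
      ⟨(t, 0), mem_product.2 ⟨ht, by simp [mem_deltaC]⟩⟩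
    exact ⟨congrFun hv (d, 0), (gcwL_apply_one _ v d).symm.trans (congrFun hv (d, 1))⟩
  have h₂ := eq_zero_of_dotProduct_compl_deltaC_eq_zero hM fun t ht => (hvanish t ht).1
  have h₁₂ := eq_zero_of_dotProduct_compl_deltaC_eq_zero hM fun t ht => (hvanish t ht).2
  rw [h₂, add_zero] at h₁₂
  exact Prod.ext h₁₂ h₂

lemma le_hammingNorm_gcwL_deltaC (hM : M.Nonempty) {v : (Fin m → ZMod 2) × (Fin m → ZMod 2)}
    (hv : gcwL ((deltaC M)ᶜ ×ˢ deltaC N) v ≠ 0) :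
    2 ^ (m + #N - 1) - 2 ^ (#M + #N - 1) ≤ hammingNorm (gcwL ((deltaC M)ᶜ ×ˢ deltaC N) v) := by
  have hMm : #M ≤ m := by simpa using card_le_univ M
  have hv' : v.2 ≠ 0 ∨ v.1 + v.2 ≠ 0 := by
    by_contra! h
    obtain ⟨h₂, h₁₂⟩ := h
    rw [h₂, add_zero] at h₁₂
    exact hv (by rw [show v = 0 from Prod.ext h₁₂ h₂]; exact map_zero (gcwLAddHom _))
  have hbound : 2 ^ m - 2 ^ #M ≤ 2 * #{t ∈ (deltaC M)ᶜ | v.2 ⬝ᵥ t ≠ 0}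
      + 2 * #{t ∈ (deltaC M)ᶜ | (v.1 + v.2) ⬝ᵥ t ≠ 0} := by
    rcases hv' with h | h
    · exact (sub_le_two_mul_card_filter_compl_deltaC h).trans (Nat.le_add_right _ _)
    · exact (sub_le_two_mul_card_filter_compl_deltaC h).trans (Nat.le_add_left _ _)
  rw [hammingNorm_gcwL_product, card_deltaC]
  refine Nat.le_of_mul_le_mul_left ?_ two_pos
  calc 2 * (2 ^ (m + #N - 1) - 2 ^ (#M + #N - 1))
      _ = 2 ^ #N * (2 ^ m - 2 ^ #M) := two_mul_two_pow_sub_two_pow #N (card_pos.2 hM) hMm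
      _ ≤ 2 ^ #N * (2 * #{t ∈ (deltaC M)ᶜ | v.2 ⬝ᵥ t ≠ 0}
            + 2 * #{t ∈ (deltaC M)ᶜ | (v.1 + v.2) ⬝ᵥ t ≠ 0}) := Nat.mul_le_mul_left _ hbound
      _ = _ := by ring

lemma hammingNorm_gcwL_deltaC_single {i : Fin m} (hi : i ∈ M) :
    hammingNorm (gcwL ((deltaC M)ᶜ ×ˢ deltaC N) (Pi.single i 1, Pi.single i 1)) =
      2 ^ (m + #N - 1) - 2 ^ (#M + #N - 1) := by
  have hMm : #M ≤ m := by simpa using card_le_univ M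
  rw [hammingNorm_gcwL_product, card_deltaC]
  dsimp only
  rw [Pi.add_self_zmod_two]
  refine Nat.eq_of_mul_eq_mul_left two_pos ?_
  rw [two_mul_two_pow_sub_two_pow #N (card_pos.2 ⟨i, hi⟩) hMm,
    ← two_mul_card_filter_compl_deltaC_single hi]
  simp only [zero_dotProduct, ne_eq, not_true_eq_false, filter_false, card_empty, add_zero]
  ring

lemma sum_gcwL_mul_gcwL_deltaC_eq_zero (h : 3 ≤ #M + #N)
    (v w : (Fin m → ZMod 2) × (Fin m → ZMod 2)) :
    ∑ x, gcwL ((deltaC M)ᶜ ×ˢ deltaC N) v x * gcwL ((deltaC M)ᶜ ×ˢ deltaC N) w x = 0 := by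
  rw [sum_gcwL_mul_gcwL_product, card_deltaC]
  rcases Nat.eq_zero_or_pos #N with hN | hN
  · rw [hN, pow_zero, one_smul, sum_add_distrib,
      sum_dotProduct_mul_dotProduct_compl_deltaC (by omega),
      sum_dotProduct_mul_dotProduct_compl_deltaC (by omega), add_zero]
  · rw [nsmul_eq_mul, Nat.cast_pow, show ((2 : ℕ) : ZMod 2) = 0 from rfl, zero_pow hN.ne', zero_mul]

end LeftGrayCode

theorem stmt_6_general {m : ℕ} (M N : Finset (Fin m))
    (hM : M ≠ ∅) (hMu : M ≠ Finset.univ)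
    (Ds : Finset ((Fin m → ZMod 2) × (Fin m → ZMod 2)))
    (hDs : Ds = (deltaC M)ᶜ ×ˢ deltaC N) :
    (2 * Ds.card = (2 ^ m - 2 ^ M.card) * 2 ^ (N.card + 1)) ∧
    ((Finset.univ : Finset ((Fin m → ZMod 2) × (Fin m → ZMod 2))).image (gcwL Ds)).card = 2 ^ (2 * m) ∧
    (∀ v w : (Fin m → ZMod 2) × (Fin m → ZMod 2), ∃ z : (Fin m → ZMod 2) × (Fin m → ZMod 2), gcwL Ds z = gcwL Ds v + gcwL Ds w) ∧
    (∀ v : (Fin m → ZMod 2) × (Fin m → ZMod 2), gcwL Ds v ≠ 0 → 2 ^ (m + N.card - 1) - 2 ^ (M.card + N.card - 1) ≤ hammingNorm (gcwL Ds v)) ∧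
    (∃ v : (Fin m → ZMod 2) × (Fin m → ZMod 2), gcwL Ds v ≠ 0 ∧ hammingNorm (gcwL Ds v) = 2 ^ (m + N.card - 1) - 2 ^ (M.card + N.card - 1)) ∧
    (3 ≤ M.card + N.card →
      ∀ v w : (Fin m → ZMod 2) × (Fin m → ZMod 2), ∑ i, gcwL Ds v i * gcwL Ds w i = 0) := by
  subst hDs
  have hMne : M.Nonempty := nonempty_iff_ne_empty.2 hM
  have ⟨i, hi⟩ := hMne
  have hcard : Fintype.card (Fin m → ZMod 2) = 2 ^ m := by simp
  refine ⟨?_, ?_, fun v w => ⟨v + w, gcwL_add _ v w⟩, fun v => le_hammingNorm_gcwL_deltaC hMne,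
    ⟨_, ?_, hammingNorm_gcwL_deltaC_single hi⟩, fun h => sum_gcwL_mul_gcwL_deltaC_eq_zero h⟩
  · rw [card_product, card_compl, card_deltaC, card_deltaC, hcard, pow_succ]
    ring
  · rw [card_image_of_injective _ (gcwL_deltaC_injective hMu), card_univ, Fintype.card_prod,
      hcard, ← pow_add, two_mul]
  · intro h
    have := gcwL_deltaC_injective (N := N) hMu (h.trans (map_zero (gcwLAddHom _)).symm)
    simp at this

theorem stmt_6 {m : ℕ} (hm : 1 ≤ m) (M N : Finset (Fin m))
    (hM : M ≠ ∅) (hMu : M ≠ Finset.univ)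
    (Ds : Finset ((Fin m → ZMod 2) × (Fin m → ZMod 2)))
    (hDs : Ds = (deltaC M)ᶜ ×ˢ deltaC N) :
    (2 * Ds.card = (2 ^ m - 2 ^ M.card) * 2 ^ (N.card + 1)) ∧
    ((Finset.univ : Finset ((Fin m → ZMod 2) × (Fin m → ZMod 2))).image (gcwL Ds)).card = 2 ^ (2 * m) ∧
    (∀ v w : (Fin m → ZMod 2) × (Fin m → ZMod 2), ∃ z : (Fin m → ZMod 2) × (Fin m → ZMod 2), gcwL Ds z = gcwL Ds v + gcwL Ds w) ∧
    (∀ v : (Fin m → ZMod 2) × (Fin m → ZMod 2), gcwL Ds v ≠ 0 → 2 ^ (m + N.card - 1) - 2 ^ (M.card + N.card - 1) ≤ hammingNorm (gcwL Ds v)) ∧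
    (∃ v : (Fin m → ZMod 2) × (Fin m → ZMod 2), gcwL Ds v ≠ 0 ∧ hammingNorm (gcwL Ds v) = 2 ^ (m + N.card - 1) - 2 ^ (M.card + N.card - 1)) ∧
    (3 ≤ M.card + N.card →
      ∀ v w : (Fin m → ZMod 2) × (Fin m → ZMod 2), ∑ i, gcwL Ds v i * gcwL Ds w i = 0) :=
  stmt_6_general M N hM hMu Ds hDs
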